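/- arXiv:2409.04866 — 2 statements merged into one kernel-verified Lean document; each statement's English description precedes it below -/
import Mathlib

section
/- For every 0<r<∞ there exist constants C_r and T_r such that for every quasi-Banach lattice L and every finite family (f_j)_{j∈J} in L, the lattice-order inequalities (1/C_r)·Ave_{ε_j=±1}(Σ_{j∈J} ε_j f_j ; r) ≤ (Σ_{j∈J} |f_j|²)^{1/2} ≤ T_r·Ave_{ε_j=±1}(Σ_{j∈J} ε_j f_j ; r) hold, where Ave_{ε_j=±1}(Σ_j ε_j f_j ; r) = (2^{−|J|} Σ_{ε∈{−1,1}^J} |Σ_{j∈J} ε_j f_j|^r)^{1/r} ∈ L. -/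
/-!
Statement 2: Lattice-valued Khintchine inequalities. For every `0 < r < ∞` there are constants
`C_r`, `T_r` such that for every quasi-Banach lattice `L` and every finite family `(f_j)_{j∈J}`
in `L`, the lattice-order inequalities
`(1/C_r) · Ave_{ε_j=±1}(∑_j ε_j f_j ; r) ≤ (∑_j |f_j|²)^{1/2} ≤ T_r · Ave_{ε_j=±1}(∑_j ε_j f_j ; r)`
hold, where `Ave(∑ ε_j f_j ; r) = (2^{-|J|} ∑_{ε∈{-1,1}^J} |∑_j ε_j f_j|^r)^{1/r}` is computed
via the lattice functional calculus.

We model quasi-Banach lattices as Köthe-type function lattices (solid linear subspaces of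
`Ω → ℝ` with the pointwise order, carrying a complete monotone quasi-norm), so the lattice
functional calculus is computed pointwise and the lattice order is the pointwise order.
-/

noncomputable section
open Filter Topology

structure IsQBLattice {Ω : Type*} (mem : (Ω → ℝ) → Prop) (q : (Ω → ℝ) → ℝ) : Prop where
  zero_mem : mem 0
  add_mem : ∀ ⦃f g⦄, mem f → mem g → mem (f + g)
  smul_mem : ∀ (c : ℝ) ⦃f⦄, mem f → mem (c • f)
  solid : ∀ ⦃f g : Ω → ℝ⦄, mem g → (∀ ω, |f ω| ≤ |g ω|) → mem f
  q_nonneg : ∀ f, 0 ≤ q f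
  q_pos : ∀ ⦃f⦄, mem f → f ≠ 0 → 0 < q f
  q_smul : ∀ (c : ℝ) (f : Ω → ℝ), q (c • f) = |c| * q f
  q_mono : ∀ ⦃f g⦄, mem f → mem g → (∀ ω, |f ω| ≤ |g ω|) → q f ≤ q g
  quasi_triangle : ∃ C : ℝ, 1 ≤ C ∧ ∀ ⦃f g⦄, mem f → mem g → q (f + g) ≤ C * (q f + q g)
  complete : ∀ F : ℕ → Ω → ℝ, (∀ n, mem (F n)) →
    (∀ ε : ℝ, 0 < ε → ∃ N, ∀ m ≥ N, ∀ n ≥ N, q (F m - F n) < ε) →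
    ∃ g, mem g ∧ Tendsto (fun n => q (F n - g)) atTop (nhds 0)

/-- The sign `±1` associated with a Boolean. -/
def signOf (b : Bool) : ℝ := if b then 1 else -1

/-- The lattice-valued `r`-average
`Ave_{ε_j=±1}(∑_j ε_j f_j ; r) = (2^{-n} ∑_{ε∈{-1,1}^n} |∑_j ε_j f_j|^r)^{1/r}`,
computed pointwise via the lattice functional calculus. -/
def radAve {Ω : Type*} (r : ℝ) {n : ℕ} (f : Fin n → Ω → ℝ) : Ω → ℝ :=
  fun ω => ((2 ^ n : ℝ)⁻¹ * ∑ θ : Fin n → Bool, |∑ j, signOf (θ j) * f j ω| ^ r) ^ (1 / r)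

/-- The lattice element `(∑_j |f_j|²)^{1/2}`, computed pointwise. -/
def vTwo {Ω : Type*} {n : ℕ} (f : Fin n → Ω → ℝ) : Ω → ℝ :=
  fun ω => (∑ j, |f j ω| ^ (2 : ℝ)) ^ (1 / (2 : ℝ))

/-!
Both sides are computed pointwise, so this is the scalar Khintchine inequality for the
Rademacher sum `S = ∑ ε_j a_j`. From `𝔼 exp S = ∏ cosh a_j ≤ exp (‖a‖₂² / 2)` and
`|x| ^ m ≤ m! (eˣ + e⁻ˣ)`, every moment satisfies `‖S‖_m ≤ C_m ‖a‖₂`; orthogonality of the signs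
gives `‖S‖_2 = ‖a‖₂`. Monotonicity of `p ↦ ‖S‖_p` then yields the upper bound for every `r` and the
lower bound for `r ≥ 2`. For `r < 2`, Lyapunov's inequality `‖S‖_2 ≤ ‖S‖_r ^ (1 - θ) ‖S‖_3 ^ θ`
together with `‖S‖_3 ≤ C_3 ‖S‖_2` gives `‖S‖_2 ≤ T_r ‖S‖_r`. Here `‖g‖_p = (𝔼 |g| ^ p) ^ (1 / p)`
is taken over the uniform measure on sign patterns.
-/

open Finset Real
open scoped BigOperators Nat

section ExpectLpNorm

variable {α : Type*} [Fintype α]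

def expectLpNorm (p : ℝ) (g : α → ℝ) : ℝ := (𝔼 i, |g i| ^ p) ^ (1 / p)

lemma expect_abs_rpow_nonneg (p : ℝ) (g : α → ℝ) : 0 ≤ 𝔼 i, |g i| ^ p :=
  expect_nonneg fun _ _ => rpow_nonneg (abs_nonneg _) _

lemma expectLpNorm_nonneg (p : ℝ) (g : α → ℝ) : 0 ≤ expectLpNorm p g :=
  rpow_nonneg (expect_abs_rpow_nonneg p g) _

lemma expectLpNorm_rpow {p : ℝ} (hp : p ≠ 0) (g : α → ℝ) :
    expectLpNorm p g ^ p = 𝔼 i, |g i| ^ p := by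
  rw [expectLpNorm, one_div, rpow_inv_rpow (expect_abs_rpow_nonneg p g) hp]

lemma expectLpNorm_mono [Nonempty α] {p q : ℝ} (hp : 0 < p) (hpq : p ≤ q) (g : α → ℝ) :
    expectLpNorm p g ≤ expectLpNorm q g := by
  have hP : 1 ≤ q / p := (one_le_div hp).2 hpq
  have jensen := compact_inner_le_weight_mul_Lp_of_nonneg univ hP (w := fun _ => 1)
    (f := fun i => |g i| ^ p) (fun _ => zero_le_one) (fun _ => rpow_nonneg (abs_nonneg _) _)
  simp only [one_mul, expect_const univ_nonempty, one_rpow] at jensen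
  have hpow : ∀ i, (|g i| ^ p) ^ (q / p) = |g i| ^ q := fun i => by
    rw [← rpow_mul (abs_nonneg _), mul_div_cancel₀ _ hp.ne']
  simp only [hpow, inv_div] at jensen
  calc expectLpNorm p g ≤ ((𝔼 i, |g i| ^ q) ^ (p / q)) ^ (1 / p) := by
        unfold expectLpNorm; gcongr
    _ = expectLpNorm q g := by
        rw [← rpow_mul (expect_abs_rpow_nonneg q g), expectLpNorm]
        congr 1; field_simp

/-- Lyapunov's inequality: `p ↦ log 𝔼 |g| ^ p` is convex. -/
lemma expect_abs_rpow_le_rpow_mul_rpow {p q s : ℝ} (hq : 0 < q) (hpq : p < q) (hqs : q ≤ s)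
    (g : α → ℝ) :
    𝔼 i, |g i| ^ q ≤
      (𝔼 i, |g i| ^ p) ^ ((s - q) / (s - p)) * (𝔼 i, |g i| ^ s) ^ ((q - p) / (s - p)) := by
  have hP : 1 ≤ (s - p) / (q - p) := (one_le_div (by linarith)).2 (by linarith)
  have holder := compact_inner_le_weight_mul_Lp_of_nonneg univ hP (w := fun i => |g i| ^ p)
    (f := fun i => |g i| ^ (q - p)) (fun _ => rpow_nonneg (abs_nonneg _) _)
    (fun _ => rpow_nonneg (abs_nonneg _) _)
  have hq' : ∀ i, |g i| ^ p * |g i| ^ (q - p) = |g i| ^ q := fun i => by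
    rw [← rpow_add' (abs_nonneg _) (by linarith), add_sub_cancel]
  have hs' : ∀ i, |g i| ^ p * (|g i| ^ (q - p)) ^ ((s - p) / (q - p)) = |g i| ^ s := fun i => by
    rw [← rpow_mul (abs_nonneg _), mul_div_cancel₀ _ (by linarith),
      ← rpow_add' (abs_nonneg _) (by linarith), add_sub_cancel]
  simp only [hq', hs', inv_div] at holder
  convert holder using 3
  rw [eq_sub_iff_add_eq, ← add_div, sub_add_sub_cancel, div_self (by linarith)]

lemma expectLpNorm_le_mul_of_le_mul {p q s K : ℝ} (hp : 0 < p) (hpq : p < q) (hqs : q < s)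
    (hK : 0 ≤ K) (g : α → ℝ) (h : expectLpNorm s g ≤ K * expectLpNorm q g) :
    expectLpNorm q g ≤ K ^ (s * (q - p) / (p * (s - q))) * expectLpNorm p g := by
  have lyapunov : expectLpNorm q g ^ q ≤ (expectLpNorm p g ^ p) ^ ((s - q) / (s - p)) *
      (expectLpNorm s g ^ s) ^ ((q - p) / (s - p)) := by
    simp only [expectLpNorm_rpow hp.ne', expectLpNorm_rpow (hp.trans hpq).ne',
      expectLpNorm_rpow (hp.trans (hpq.trans hqs)).ne']
    exact expect_abs_rpow_le_rpow_mul_rpow (hp.trans hpq) hpq hqs.le g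
  have hx := expectLpNorm_nonneg p g
  have hy := expectLpNorm_nonneg q g
  have hz := expectLpNorm_nonneg s g
  generalize expectLpNorm p g = x at *
  generalize expectLpNorm q g = y at *
  generalize expectLpNorm s g = z at *
  rcases hy.eq_or_lt with rfl | hy
  · positivity
  have hs : 0 < s := by linarith
  have hsp : 0 < s - p := by linarith
  have he : 0 < p * ((s - q) / (s - p)) := mul_pos hp (div_pos (by linarith) hsp)
  have hq : q = p * ((s - q) / (s - p)) + s * ((q - p) / (s - p)) := by field_simp; ring
  have hKc : K ^ (s * ((q - p) / (s - p))) =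
      (K ^ (s * (q - p) / (p * (s - q)))) ^ (p * ((s - q) / (s - p))) := by
    rw [← rpow_mul hK]; congr 1; field_simp [(by linarith : s - q ≠ 0)]
  -- Bound `z` by `K * y` in Lyapunov's inequality and cancel the resulting power of `y`.
  refine (rpow_le_rpow_iff hy.le (by positivity) he).1 ?_
  refine le_of_mul_le_mul_right ?_ (rpow_pos_of_pos hy (s * ((q - p) / (s - p))))
  calc y ^ (p * ((s - q) / (s - p))) * y ^ (s * ((q - p) / (s - p))) = y ^ q := by
        rw [← rpow_add hy, ← hq]
    _ ≤ (x ^ p) ^ ((s - q) / (s - p)) * (z ^ s) ^ ((q - p) / (s - p)) := lyapunov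
    _ ≤ (x ^ p) ^ ((s - q) / (s - p)) * ((K * y) ^ s) ^ ((q - p) / (s - p)) := by gcongr
    _ = (K ^ (s * (q - p) / (p * (s - q))) * x) ^ (p * ((s - q) / (s - p))) *
          y ^ (s * ((q - p) / (s - p))) := by
        rw [mul_rpow (by positivity) hx, ← hKc, ← rpow_mul hx, ← rpow_mul (by positivity),
          mul_rpow hK hy.le]
        ring

end ExpectLpNorm

lemma Fintype.prod_expect {ι K : Type*} [Fintype ι] [DecidableEq ι] [Semifield K] [CharZero K]
    {κ : ι → Type*} [∀ i, Fintype (κ i)] (f : ∀ i, κ i → K) :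
    ∏ i, 𝔼 j, f i j = 𝔼 x : ∀ i, κ i, ∏ i, f i (x i) := by
  simp only [Fintype.expect_eq_sum_div_card, prod_div_distrib, Fintype.prod_sum,
    Fintype.card_pi, Nat.cast_prod]

lemma abs_pow_le_factorial_mul_exp_add_exp (x : ℝ) (m : ℕ) :
    |x| ^ m ≤ m ! * (exp x + exp (-x)) := by
  have h := pow_div_factorial_le_exp (x := |x|) (abs_nonneg x) m
  rw [div_le_iff₀ (by positivity)] at h
  have hexp : exp |x| ≤ exp x + exp (-x) := by
    rcases abs_cases x with ⟨hx, -⟩ | ⟨hx, -⟩ <;> rw [hx] <;> linarith [exp_pos x, exp_pos (-x)]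
  have hm : (0 : ℝ) < m ! := by positivity
  nlinarith

lemma signOf_not (b : Bool) : signOf (!b) = -signOf b := by
  cases b <;> simp [signOf]

lemma signOf_mul_self (b : Bool) : signOf b * signOf b = 1 := by
  cases b <;> simp [signOf]

section Rademacher

variable {ι : Type*} [Fintype ι]

def rademacherSum (a : ι → ℝ) (θ : ι → Bool) : ℝ := ∑ j, signOf (θ j) * a j

lemma rademacherSum_smul (c : ℝ) (a : ι → ℝ) (θ : ι → Bool) :
    rademacherSum (c • a) θ = c * rademacherSum a θ := by
  simp only [rademacherSum, Pi.smul_apply, smul_eq_mul, mul_sum, mul_left_comm]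

lemma rademacherSum_neg (a : ι → ℝ) (θ : ι → Bool) :
    rademacherSum (-a) θ = -rademacherSum a θ := by
  simp [rademacherSum, sum_neg_distrib]

lemma expect_exp_rademacherSum [DecidableEq ι] (a : ι → ℝ) :
    𝔼 θ, exp (rademacherSum a θ) = ∏ j, cosh (a j) := by
  simp only [rademacherSum, exp_sum]
  rw [← Fintype.prod_expect fun j b => exp (signOf b * a j)]
  refine prod_congr rfl fun j _ => ?_
  rw [Fintype.expect_eq_sum_div_card, Fintype.sum_bool, cosh_eq]
  simp [signOf]

lemma expect_exp_rademacherSum_le [DecidableEq ι] (a : ι → ℝ) :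
    𝔼 θ, exp (rademacherSum a θ) ≤ exp ((∑ j, a j ^ 2) / 2) := by
  rw [expect_exp_rademacherSum, sum_div, exp_sum]
  exact prod_le_prod (fun j _ => (cosh_pos _).le) fun j _ => cosh_le_exp_half_sq _

lemma expect_signOf_mul_signOf [DecidableEq ι] (i j : ι) :
    𝔼 θ : ι → Bool, signOf (θ i) * signOf (θ j) = if i = j then 1 else 0 := by
  split_ifs with hij
  · subst hij
    simp [signOf_mul_self]
  · have flip : Function.Involutive fun θ : ι → Bool => Function.update θ i (!θ i) :=
      fun θ => by simp
    have hneg := Fintype.expect_bijective _ flip.bijective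
      (fun θ => -(signOf (θ i) * signOf (θ j))) (fun θ => signOf (θ i) * signOf (θ j))
      fun θ => by simp [Function.update_of_ne (Ne.symm hij), signOf_not]
    rw [expect_neg_distrib] at hneg
    linarith

lemma expect_rademacherSum_sq [DecidableEq ι] (a : ι → ℝ) :
    𝔼 θ, rademacherSum a θ ^ 2 = ∑ j, a j ^ 2 := by
  calc 𝔼 θ, rademacherSum a θ ^ 2
      = 𝔼 θ : ι → Bool, ∑ i, ∑ j, a i * a j * (signOf (θ i) * signOf (θ j)) := by
        refine expect_congr rfl fun θ _ => ?_
        rw [rademacherSum, sq, sum_mul_sum]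
        exact sum_congr rfl fun i _ => sum_congr rfl fun j _ => by ring
    _ = ∑ i, ∑ j, a i * a j * 𝔼 θ : ι → Bool, signOf (θ i) * signOf (θ j) := by
        simp only [expect_sum_comm, mul_expect]
    _ = ∑ j, a j ^ 2 := by simp [expect_signOf_mul_signOf, sq]

lemma expect_abs_rademacherSum_pow_le_of_sum_sq_eq_one [DecidableEq ι] {b : ι → ℝ}
    (hb : ∑ j, b j ^ 2 = 1) (m : ℕ) :
    𝔼 θ, |rademacherSum b θ| ^ m ≤ 2 * exp (1 / 2) * m ! := by
  have hsub : ∀ c : ι → ℝ, ∑ j, c j ^ 2 = 1 → 𝔼 θ, exp (rademacherSum c θ) ≤ exp (1 / 2) :=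
    fun c hc => hc ▸ expect_exp_rademacherSum_le c
  calc 𝔼 θ, |rademacherSum b θ| ^ m
      ≤ 𝔼 θ, (m ! : ℝ) * (exp (rademacherSum b θ) + exp (rademacherSum (-b) θ)) :=
        expect_le_expect fun θ _ => by
          simpa [rademacherSum_neg] using abs_pow_le_factorial_mul_exp_add_exp _ m
    _ = m ! * (𝔼 θ, exp (rademacherSum b θ) + 𝔼 θ, exp (rademacherSum (-b) θ)) := by
        rw [← mul_expect, expect_add_distrib]
    _ ≤ m ! * (exp (1 / 2) + exp (1 / 2)) := by
        gcongr
        · exact hsub b hb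
        · exact hsub (-b) (by simpa using hb)
    _ = 2 * exp (1 / 2) * m ! := by ring

lemma expect_abs_rademacherSum_pow_le [DecidableEq ι] (a : ι → ℝ) {m : ℕ} (hm : m ≠ 0) :
    𝔼 θ, |rademacherSum a θ| ^ m ≤ 2 * exp (1 / 2) * m ! * √(∑ j, a j ^ 2) ^ m := by
  have hsq : 0 ≤ ∑ j, a j ^ 2 := sum_nonneg fun j _ => sq_nonneg _
  rcases (sqrt_nonneg (∑ j, a j ^ 2)).eq_or_lt with hσ | hσ
  · have ha : a = 0 := by
      funext j
      have hzero := (sum_eq_zero_iff_of_nonneg fun j _ => sq_nonneg (a j)).1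
        ((sqrt_eq_zero hsq).1 hσ.symm) j (mem_univ _)
      simpa using hzero
    simp [ha, rademacherSum, zero_pow hm]
  set σ := √(∑ j, a j ^ 2)
  have hb : ∑ j, (σ⁻¹ • a) j ^ 2 = 1 := by
    simp only [Pi.smul_apply, smul_eq_mul, mul_pow, ← mul_sum, inv_pow]
    rw [sq_sqrt hsq, inv_mul_cancel₀]
    exact fun h => hσ.ne' (by simp [σ, h])
  calc 𝔼 θ, |rademacherSum a θ| ^ m = σ ^ m * 𝔼 θ, |rademacherSum (σ⁻¹ • a) θ| ^ m := by
        rw [mul_expect]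
        refine expect_congr rfl fun θ _ => ?_
        rw [rademacherSum_smul, abs_mul, abs_inv, abs_of_pos hσ, mul_pow, ← mul_assoc,
          ← mul_pow, mul_inv_cancel₀ hσ.ne', one_pow, one_mul]
    _ ≤ σ ^ m * (2 * exp (1 / 2) * m !) := by
        gcongr; exact expect_abs_rademacherSum_pow_le_of_sum_sq_eq_one hb m
    _ = 2 * exp (1 / 2) * m ! * σ ^ m := mul_comm _ _

end Rademacher

section Khintchine

variable {ι : Type*} [Fintype ι] [DecidableEq ι]

lemma expectLpNorm_two_rademacherSum (a : ι → ℝ) :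
    expectLpNorm 2 (rademacherSum a) = √(∑ j, a j ^ 2) := by
  simp only [expectLpNorm, rpow_two, sq_abs, expect_rademacherSum_sq, sqrt_eq_rpow]

lemma expectLpNorm_rademacherSum_le (a : ι → ℝ) {m : ℕ} (hm : m ≠ 0) :
    expectLpNorm m (rademacherSum a) ≤
      (2 * exp (1 / 2) * m !) ^ (1 / (m : ℝ)) * √(∑ j, a j ^ 2) := by
  have hm' : (m : ℝ) ≠ 0 := Nat.cast_ne_zero.2 hm
  simp only [expectLpNorm, rpow_natCast]
  calc (𝔼 θ, |rademacherSum a θ| ^ m) ^ (1 / (m : ℝ))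
      ≤ (2 * exp (1 / 2) * m ! * √(∑ j, a j ^ 2) ^ m) ^ (1 / (m : ℝ)) := by
        gcongr
        exact expect_abs_rademacherSum_pow_le a hm
    _ = _ := by
        rw [mul_rpow (by positivity) (by positivity), ← rpow_natCast,
          ← rpow_mul (sqrt_nonneg _), mul_one_div_cancel hm', rpow_one]

end Khintchine

theorem exists_expectLpNorm_rademacherSum_le {r : ℝ} (hr : 0 < r) :
    ∃ C, 0 < C ∧ ∀ {ι : Type*} [Fintype ι] [DecidableEq ι] (a : ι → ℝ),
      expectLpNorm r (rademacherSum a) ≤ C * √(∑ j, a j ^ 2) := by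
  have hm : ⌈r⌉₊ ≠ 0 := (Nat.ceil_pos.2 hr).ne'
  refine ⟨(2 * exp (1 / 2) * ⌈r⌉₊ !) ^ (1 / (⌈r⌉₊ : ℝ)), by positivity, fun a => ?_⟩
  exact (expectLpNorm_mono hr (Nat.le_ceil r) _).trans (expectLpNorm_rademacherSum_le a hm)

theorem exists_sqrt_le_mul_expectLpNorm_rademacherSum {r : ℝ} (hr : 0 < r) :
    ∃ T, 0 < T ∧ ∀ {ι : Type*} [Fintype ι] [DecidableEq ι] (a : ι → ℝ),
      √(∑ j, a j ^ 2) ≤ T * expectLpNorm r (rademacherSum a) := by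
  rcases le_or_gt 2 r with h2r | hr2
  · refine ⟨1, one_pos, fun a => ?_⟩
    rw [one_mul, ← expectLpNorm_two_rademacherSum]
    exact expectLpNorm_mono two_pos h2r _
  · set K := (2 * exp (1 / 2) * (3 : ℕ) !) ^ (1 / ((3 : ℕ) : ℝ))
    refine ⟨K ^ (3 * (2 - r) / (r * (3 - 2))), by positivity, fun a => ?_⟩
    rw [← expectLpNorm_two_rademacherSum]
    refine expectLpNorm_le_mul_of_le_mul hr hr2 (by norm_num) (by positivity) _ ?_
    rw [expectLpNorm_two_rademacherSum]
    exact_mod_cast expectLpNorm_rademacherSum_le a (m := 3) (by norm_num)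

lemma radAve_eq_expectLpNorm {Ω : Type*} (r : ℝ) {n : ℕ} (f : Fin n → Ω → ℝ) (ω : Ω) :
    radAve r f ω = expectLpNorm r (rademacherSum fun j => f j ω) := by
  simp [radAve, expectLpNorm, rademacherSum, Fintype.expect_eq_sum_div_card, div_eq_inv_mul]

lemma vTwo_eq_sqrt {Ω : Type*} {n : ℕ} (f : Fin n → Ω → ℝ) (ω : Ω) :
    vTwo f ω = √(∑ j, f j ω ^ 2) := by
  simp only [vTwo, rpow_two, sq_abs, sqrt_eq_rpow]

/-- lattice-valued Khintchine inequalities. -/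
theorem lattice_khintchine :
    ∀ r : ℝ, 0 < r → ∃ C T : ℝ, 0 < C ∧ 0 < T ∧
      ∀ {Ω : Type*} (mem : (Ω → ℝ) → Prop) (q : (Ω → ℝ) → ℝ), IsQBLattice mem q →
        ∀ (n : ℕ) (f : Fin n → Ω → ℝ), (∀ j, mem (f j)) →
          (∀ ω, C⁻¹ * radAve r f ω ≤ vTwo f ω) ∧
          (∀ ω, vTwo f ω ≤ T * radAve r f ω) := by
  intro r hr
  obtain ⟨C, hC, upper⟩ := exists_expectLpNorm_rademacherSum_le hr
  obtain ⟨T, hT, lower⟩ := exists_sqrt_le_mul_expectLpNorm_rademacherSum hr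
  refine ⟨C, T, hC, hT, fun _ _ _ n f _ => ⟨fun ω => ?_, fun ω => ?_⟩⟩
  · rw [radAve_eq_expectLpNorm, vTwo_eq_sqrt, inv_mul_le_iff₀ hC]
    exact upper _
  · rw [radAve_eq_expectLpNorm, vTwo_eq_sqrt]
    exact lower _

end
end

section
/- Let L be a square-stable sequence space over ℕ. For each j∈ℕ, let 𝕏_j be a quasi-Banach space with a K-unconditional basis X_j (the moduli of concavity of the 𝕏_j uniformly bounded), and assume there is a constant C such that X_j is permutatively C-equivalent to a subbasis of X_k whenever j≤k. Then the unconditional basis ⊕_{j=1}^∞ X_j of (⊕_{j=1}^∞ 𝕏_j)_L is permutatively equivalent to its square. -/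
/-!
Statement 17: Let `L` be a square-stable sequence space over `ℕ`. For each `j ∈ ℕ`, let `𝕏_j`
be a quasi-Banach space with a `K`-unconditional basis `X_j` (the moduli of concavity of the
`𝕏_j` uniformly bounded), and assume there is a constant `C` such that `X_j` is permutatively
`C`-equivalent to a subbasis of `X_k` whenever `j ≤ k`. Then the unconditional basis
`⊕_j X_j` of `(⊕_j 𝕏_j)_L` is permutatively equivalent to its square.
-/

noncomputable section
open Filter Topology

/-- `q` is a quasi-norm with modulus of concavity at most `C₀` making `M` a quasi-Banach
space. -/
structure IsQuasiNormWith {M : Type*} [AddCommGroup M] [Module ℝ M] (q : M → ℝ)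
    (C₀ : ℝ) : Prop where
  q_nonneg : ∀ f, 0 ≤ q f
  q_pos : ∀ f, f ≠ 0 → 0 < q f
  q_smul : ∀ (c : ℝ) (f : M), q (c • f) = |c| * q f
  quasi_triangle : ∀ f g, q (f + g) ≤ C₀ * (q f + q g)
  complete : ∀ F : ℕ → M,
    (∀ ε : ℝ, 0 < ε → ∃ N, ∀ m ≥ N, ∀ n ≥ N, q (F m - F n) < ε) →
    ∃ g, Tendsto (fun n => q (F n - g)) atTop (nhds 0)

/-- `(memL, qL)` is a sequence space over `ℕ`: a solid quasi-Banach function lattice on `ℕ`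
in which the unit vectors are normalized. -/
structure IsSequenceSpace (memL : (ℕ → ℝ) → Prop) (qL : (ℕ → ℝ) → ℝ) : Prop where
  zero_mem : memL 0
  add_mem : ∀ ⦃f g⦄, memL f → memL g → memL (f + g)
  smul_mem : ∀ (c : ℝ) ⦃f⦄, memL f → memL (c • f)
  solid : ∀ ⦃f g : ℕ → ℝ⦄, memL g → (∀ n, |f n| ≤ |g n|) → memL f
  q_nonneg : ∀ f, 0 ≤ qL f
  q_pos : ∀ ⦃f⦄, memL f → f ≠ 0 → 0 < qL f
  q_smul : ∀ (c : ℝ) (f : ℕ → ℝ), qL (c • f) = |c| * qL f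
  q_mono : ∀ ⦃f g⦄, memL f → memL g → (∀ n, |f n| ≤ |g n|) → qL f ≤ qL g
  quasi_triangle : ∃ C : ℝ, 1 ≤ C ∧ ∀ ⦃f g⦄, memL f → memL g → qL (f + g) ≤ C * (qL f + qL g)
  complete : ∀ F : ℕ → ℕ → ℝ, (∀ n, memL (F n)) →
    (∀ ε : ℝ, 0 < ε → ∃ N, ∀ m ≥ N, ∀ n ≥ N, qL (F m - F n) < ε) →
    ∃ g, memL g ∧ Tendsto (fun n => qL (F n - g)) atTop (nhds 0)
  unit_mem : ∀ n : ℕ, memL (Pi.single n 1)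
  unit_norm : ∀ n : ℕ, qL (Pi.single n 1) = 1

/-- The interleaving of two scalar sequences along a one-to-one map `π : {1,2}×ℕ → ℕ`,
i.e. the shift `S_π` applied to the pair `(a, b) ∈ L²`. -/
def interleave (π : Bool × ℕ → ℕ) (a b : ℕ → ℝ) : ℕ → ℝ :=
  Function.extend π (fun p => if p.1 then a p.2 else b p.2) 0

/-- `L` is square-stable: there is a one-to-one map `π : {1,2}×ℕ → ℕ`, increasing in each
variable, such that the shift `S_π` restricts to an isomorphic embedding of `L²`
(with the max quasi-norm) into `L`. -/
def SquareStable (memL : (ℕ → ℝ) → Prop) (qL : (ℕ → ℝ) → ℝ) : Prop :=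
  ∃ π : Bool × ℕ → ℕ, Function.Injective π ∧
    StrictMono (fun n => π (false, n)) ∧ StrictMono (fun n => π (true, n)) ∧
    ∃ c C : ℝ, 0 < c ∧ 0 < C ∧ ∀ a b : ℕ → ℝ, memL a → memL b →
      memL (interleave π a b) ∧
      c * max (qL a) (qL b) ≤ qL (interleave π a b) ∧
      qL (interleave π a b) ≤ C * max (qL a) (qL b)

def UncondSum {M ι : Type*} [AddCommGroup M] (q : M → ℝ) (v : ι → M) (f : M) : Prop :=
  ∀ ε : ℝ, 0 < ε → ∃ F : Finset ι, ∀ G : Finset ι, F ⊆ G → q ((∑ n ∈ G, v n) - f) < ε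

/-- `x` is a `K`-unconditional basis: every element has a unique unconditionally convergent
expansion, and coefficientwise-dominated finite linear combinations have `K`-comparable
quasi-norms. -/
def IsKUncondBasis {M ι : Type*} [AddCommGroup M] [Module ℝ M] (q : M → ℝ)
    (x : ι → M) (K : ℝ) : Prop :=
  (∀ f : M, ∃! a : ι → ℝ, UncondSum q (fun n => a n • x n) f) ∧
  (∀ a b : ι →₀ ℝ, (∀ n, |b n| ≤ |a n|) →
    q (∑ n ∈ b.support, b n • x n) ≤ K * q (∑ n ∈ a.support, a n • x n))

/-- Two families, in possibly different quasi-Banach spaces, are `C`-equivalent. -/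
def EquivalentFamilies {M M' ι : Type*} [AddCommGroup M] [Module ℝ M]
    [AddCommGroup M'] [Module ℝ M'] (q : M → ℝ) (q' : M' → ℝ)
    (x : ι → M) (y : ι → M') (C : ℝ) : Prop :=
  ∀ a : ι →₀ ℝ,
    C⁻¹ * q (∑ n ∈ a.support, a n • x n) ≤ q' (∑ n ∈ a.support, a n • y n) ∧
    q' (∑ n ∈ a.support, a n • y n) ≤ C * q (∑ n ∈ a.support, a n • x n)


/-!
Square-stability of `L` provides two shifts `τ₀, τ₁ : ℕ → ℕ` with disjoint ranges and
`j ≤ τ_β j`, each an isomorphic embedding of `L` into itself. Composed with the embeddings of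
`X_j` into `X_{τ_β j}` given by the hypothesis, they yield two disjoint subbases of `⊕ⱼ Xⱼ`, each
equivalent to `⊕ⱼ Xⱼ`; together they span a copy of its square. Conversely `⊕ⱼ Xⱼ` is a subbasis
of its square. The Schröder–Bernstein principle for unconditional bases then applies: split a
combination according to whether the Cantor–Schröder–Bernstein bijection agrees with the forward
injection or inverts the backward one, and bound each piece by unconditionality.
-/

open Function Finsupp

theorem schroeder_bernstein_piecewise {α β : Type*} {f : α → β} {g : β → α}
    (hf : Injective f) (hg : Injective g) : ∃ h : α ≃ β, ∀ a, h a = f a ∨ g (h a) = a := by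
  classical
  cases isEmpty_or_nonempty β with
  | inl _ =>
    have : IsEmpty α := f.isEmpty
    exact ⟨Equiv.equivOfIsEmpty α β, isEmptyElim⟩
  | inr _ =>
    let F : Set α →o Set α :=
      { toFun := fun s => (g '' (f '' s)ᶜ)ᶜ
        monotone' := fun s t hst => Set.compl_subset_compl.2 <|
          Set.image_mono <| Set.compl_subset_compl.2 <| Set.image_mono hst }
    set s : Set α := F.lfp
    have hns : g '' (f '' s)ᶜ = sᶜ := compl_injective (by rw [compl_compl]; exact F.map_lfp)
    have g'g : LeftInverse (invFun g) g := leftInverse_invFun hg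
    have hg'ns : invFun g '' sᶜ = (f '' s)ᶜ := by rw [← hns, g'g.image_image]
    set h : α → β := s.piecewise f (invFun g)
    have hsurj : Surjective h := by
      rw [← Set.range_eq_univ, Set.range_piecewise, hg'ns, Set.union_compl_self]
    have hinj : Injective h := by
      refine (Set.injective_piecewise_iff _).2 ⟨hf.injOn, ?_, ?_⟩
      · intro x hx y hy hxy
        obtain ⟨x', _, rfl⟩ : x ∈ g '' (f '' s)ᶜ := by rwa [hns]
        obtain ⟨y', _, rfl⟩ : y ∈ g '' (f '' s)ᶜ := by rwa [hns]
        rw [g'g _, g'g _] at hxy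
        rw [hxy]
      · intro x hx y hy
        obtain ⟨y', hy', rfl⟩ : y ∈ g '' (f '' s)ᶜ := by rwa [hns]
        rw [g'g _]
        rintro rfl
        exact hy' ⟨x, hx, rfl⟩
    refine ⟨Equiv.ofBijective h ⟨hinj, hsurj⟩, fun a => ?_⟩
    by_cases ha : a ∈ s
    · exact .inl (Set.piecewise_eq_of_mem _ _ _ ha)
    · obtain ⟨b, -, rfl⟩ : a ∈ g '' (f '' s)ᶜ := by rwa [hns]
      refine .inr ?_
      show g (s.piecewise f (invFun g) (g b)) = g b
      rw [Set.piecewise_eq_of_notMem _ _ _ ha, g'g b]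

section Families

variable {ι κ M N : Type*} [AddCommGroup M] [Module ℝ M] [AddCommGroup N] [Module ℝ N]
  {q : M → ℝ} {x : ι → M} {q' : N → ℝ} {y : ι → N}

def Dominates (q : M → ℝ) (x : ι → M) (q' : N → ℝ) (y : ι → N) : Prop :=
  ∃ A, 0 ≤ A ∧ ∀ a : ι →₀ ℝ, q' (linearCombination ℝ y a) ≤ A * q (linearCombination ℝ x a)

def Equivalent (q : M → ℝ) (x : ι → M) (q' : N → ℝ) (y : ι → N) : Prop :=
  Dominates q x q' y ∧ Dominates q' y q x

theorem Dominates.comp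
    (h : Dominates q x q' y) (σ : κ → ι) : Dominates q (x ∘ σ) q' (y ∘ σ) := by
  obtain ⟨A, hA, h⟩ := h
  exact ⟨A, hA, fun a => by simpa only [linearCombination_mapDomain] using h (a.mapDomain σ)⟩

theorem Equivalent.symm
    (h : Equivalent q x q' y) : Equivalent q' y q x :=
  ⟨h.2, h.1⟩

theorem Equivalent.exists_equivalentFamilies
    (h : Equivalent q x q' y) (hq : ∀ a, 0 ≤ q (linearCombination ℝ x a))
    (hq' : ∀ a, 0 ≤ q' (linearCombination ℝ y a)) :
    ∃ C, 0 < C ∧ EquivalentFamilies q q' x y C := by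
  obtain ⟨⟨A, hA, hxy⟩, ⟨B, hB, hyx⟩⟩ := h
  refine ⟨max (max A B) 1, by positivity, fun a => ⟨?_, ?_⟩⟩
  · rw [inv_mul_le_iff₀ (by positivity)]
    exact (hyx a).trans (mul_le_mul_of_nonneg_right (by simp) (hq' a))
  · exact (hxy a).trans (mul_le_mul_of_nonneg_right (by simp) (hq a))

structure IsUnconditionalFamily (q : M → ℝ) (v : ι → M) : Prop where
  nonneg : ∀ a, 0 ≤ q (linearCombination ℝ v a)
  quasi_triangle : ∃ κ, 0 ≤ κ ∧ ∀ a b : ι →₀ ℝ, q (linearCombination ℝ v (a + b)) ≤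
    κ * (q (linearCombination ℝ v a) + q (linearCombination ℝ v b))
  le_of_abs_le : ∃ K, 0 ≤ K ∧ ∀ a b : ι →₀ ℝ, (∀ i, |b i| ≤ |a i|) →
    q (linearCombination ℝ v b) ≤ K * q (linearCombination ℝ v a)

theorem IsUnconditionalFamily.comp (hx : IsUnconditionalFamily q x) {σ : κ → ι}
    (hσ : Injective σ) : IsUnconditionalFamily q (x ∘ σ) := by
  obtain ⟨h0, ⟨C, hC, hqt⟩, ⟨K, hK, hle⟩⟩ := hx
  refine ⟨fun a => ?_, ⟨C, hC, fun a b => ?_⟩, ⟨K, hK, fun a b hab => ?_⟩⟩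
  · simpa only [linearCombination_mapDomain] using h0 (a.mapDomain σ)
  · have := hqt (a.mapDomain σ) (b.mapDomain σ)
    rwa [← mapDomain_add, linearCombination_mapDomain, linearCombination_mapDomain,
      linearCombination_mapDomain] at this
  · simp only [← linearCombination_mapDomain]
    refine hle _ _ fun i => ?_
    by_cases hi : i ∈ Set.range σ
    · obtain ⟨k, rfl⟩ := hi
      simpa only [mapDomain_apply hσ] using hab k
    · simp [mapDomain_of_notMem_range _ _ hi]

theorem IsUnconditionalFamily.of_equivalent
    (hx : IsUnconditionalFamily q x) (h : Equivalent q x q' y)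
    (hy : ∀ a, 0 ≤ q' (linearCombination ℝ y a)) : IsUnconditionalFamily q' y := by
  obtain ⟨-, ⟨C, hC, hqt⟩, ⟨K, hK, hle⟩⟩ := hx
  obtain ⟨⟨A, hA, hxy⟩, ⟨B, hB, hyx⟩⟩ := h
  refine ⟨hy, ⟨A * C * B, by positivity, fun a b => ?_⟩,
    ⟨A * K * B, by positivity, fun a b hab => ?_⟩⟩
  · calc q' (linearCombination ℝ y (a + b))
        ≤ A * (C * (q (linearCombination ℝ x a) + q (linearCombination ℝ x b))) :=
          (hxy _).trans (mul_le_mul_of_nonneg_left (hqt a b) hA)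
      _ ≤ A * (C * (B * q' (linearCombination ℝ y a) + B * q' (linearCombination ℝ y b))) := by
          gcongr
          exacts [hyx a, hyx b]
      _ = A * C * B * (q' (linearCombination ℝ y a) + q' (linearCombination ℝ y b)) := by ring
  · calc q' (linearCombination ℝ y b)
        ≤ A * (K * q (linearCombination ℝ x a)) :=
          (hxy _).trans (mul_le_mul_of_nonneg_left (hle a b hab) hA)
      _ ≤ A * (K * (B * q' (linearCombination ℝ y a))) := by gcongr; exact hyx a
      _ = A * K * B * q' (linearCombination ℝ y a) := by ring

end Families

section SchroederBernstein

variable {α β M N : Type*} [AddCommGroup M] [Module ℝ M] [AddCommGroup N] [Module ℝ N]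
  {q : M → ℝ} {x : α → M} {q' : N → ℝ} {y : β → N}

theorem dominates_comp_of_forall_eq_or_eq (hx : IsUnconditionalFamily q x)
    (hy : IsUnconditionalFamily q' y) {f h : α → β} {g : β → α}
    (hf : Dominates q x q' (y ∘ f)) (hg : Dominates q (x ∘ g) q' y)
    (hfg : ∀ s, h s = f s ∨ g (h s) = s) : Dominates q x q' (y ∘ h) := by
  classical
  obtain ⟨κ, hκ, hqt⟩ := hy.quasi_triangle
  obtain ⟨K, hK, hle⟩ := hx.le_of_abs_le
  obtain ⟨A, hA, hf⟩ := hf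
  obtain ⟨B, hB, hg⟩ := hg
  refine ⟨κ * (A * K + B * K), by positivity, fun a => ?_⟩
  set aF := a.filter fun s => h s = f s
  set aG := a.filter fun s => ¬h s = f s
  have hle_filter (p : α → Prop) [DecidablePred p] :
      q (linearCombination ℝ x (a.filter p)) ≤ K * q (linearCombination ℝ x a) :=
    hle a _ fun s => by rw [filter_apply]; split_ifs <;> simp
  have hhF : aF.mapDomain h = aF.mapDomain f :=
    mapDomain_congr fun s hs => (Finset.mem_filter.1 hs).2
  have hhG : (aG.mapDomain h).mapDomain g = aG := by
    rw [← mapDomain_comp, mapDomain_congr (g := id), mapDomain_id]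
    intro s hs
    exact (hfg s).resolve_left (Finset.mem_filter.1 hs).2
  calc q' (linearCombination ℝ (y ∘ h) a)
      = q' (linearCombination ℝ y (aF.mapDomain f + aG.mapDomain h)) := by
        rw [← hhF, ← mapDomain_add, filter_add_filter_not, linearCombination_mapDomain]
    _ ≤ κ * (q' (linearCombination ℝ (y ∘ f) aF) +
          q' (linearCombination ℝ y (aG.mapDomain h))) := by
        rw [← linearCombination_mapDomain]
        exact hqt _ _
    _ ≤ κ * (A * q (linearCombination ℝ x aF) + B * q (linearCombination ℝ x aG)) := by
        gcongr
        · exact hf aF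
        · simpa only [← linearCombination_mapDomain, hhG] using hg (aG.mapDomain h)
    _ ≤ κ * (A * (K * q (linearCombination ℝ x a)) + B * (K * q (linearCombination ℝ x a))) :=
        by gcongr <;> exact hle_filter _
    _ = κ * (A * K + B * K) * q (linearCombination ℝ x a) := by ring

theorem IsUnconditionalFamily.exists_equiv_equivalent (hx : IsUnconditionalFamily q x)
    (hy : IsUnconditionalFamily q' y) {f : α → β} {g : β → α} (hfi : Injective f)
    (hgi : Injective g) (hf : Equivalent q x q' (y ∘ f)) (hg : Equivalent q' y q (x ∘ g)) :
    ∃ h : α ≃ β, Equivalent q x q' (y ∘ h) := by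
  obtain ⟨h, hh⟩ := schroeder_bernstein_piecewise hfi hgi
  have hh_symm : ∀ b, h.symm b = g b ∨ f (h.symm b) = b := fun b => by
    rcases hh (h.symm b) with hb | hb <;> rw [h.apply_symm_apply] at hb
    exacts [.inr hb.symm, .inl hb.symm]
  refine ⟨h, dominates_comp_of_forall_eq_or_eq hx hy hf.1 hg.2 hh, ?_⟩
  simpa only [comp_assoc, Equiv.symm_comp_self, comp_id] using
    (dominates_comp_of_forall_eq_or_eq hy hx hg.1 hf.2 hh_symm).comp h

end SchroederBernstein

section Square

variable {T M N : Type*} [AddCommGroup M] [Module ℝ M] [AddCommGroup N] [Module ℝ N]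

def squareFamily (e : T → N) : Fin 2 × T → Fin 2 → N :=
  fun p => Pi.single p.1 (e p.2)

def squareNorm (q : N → ℝ) (F : Fin 2 → N) : ℝ :=
  max (q (F 0)) (q (F 1))

theorem linearCombination_prod {J : Type*} [Fintype J] (w : J × T → M) (a : J × T →₀ ℝ) :
    linearCombination ℝ w a = ∑ j, linearCombination ℝ (w ∘ Prod.mk j) (a.curry j) :=
  (sum_curry_index a fun j s c => c • w (j, s)).symm.trans
    (sum_fintype _ _ fun _ => sum_zero_index)

theorem linearCombination_squareFamily (e : T → N) (a : Fin 2 × T →₀ ℝ) :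
    linearCombination ℝ (squareFamily e) a = fun β => linearCombination ℝ e (a.curry β) := by
  rw [linearCombination_prod, ← Finset.univ_sum_single fun β => linearCombination ℝ e (a.curry β)]
  refine Finset.sum_congr rfl fun β _ => ?_
  exact (apply_linearCombination ℝ (LinearMap.single ℝ (fun _ => N) β) e _).symm

theorem abs_mapDomain_curry_le (a : Fin 2 × T →₀ ℝ) (β : Fin 2) (p : Fin 2 × T) :
    |(a.curry β).mapDomain (Prod.mk β) p| ≤ |a p| := by
  by_cases hp : p ∈ Set.range (Prod.mk β)
  · obtain ⟨s, rfl⟩ := hp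
    rw [mapDomain_apply (Prod.mk_right_injective β), Finsupp.curry_apply]
  · simp [mapDomain_of_notMem_range _ _ hp]

theorem equivalent_squareFamily_comp_mk_zero {q : N → ℝ} {e : T → N} (hq0 : q 0 = 0)
    (hq : ∀ a, 0 ≤ q (linearCombination ℝ e a)) :
    Equivalent q e (squareNorm q) (squareFamily e ∘ Prod.mk 0) := by
  have key (a : T →₀ ℝ) : squareNorm q (linearCombination ℝ (squareFamily e ∘ Prod.mk 0) a) =
      q (linearCombination ℝ e a) := by
    have : squareFamily e ∘ Prod.mk 0 = LinearMap.single ℝ (fun _ => N) 0 ∘ e := rfl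
    rw [this, ← apply_linearCombination]
    simp [squareNorm, hq0, hq a]
  exact ⟨⟨1, zero_le_one, fun a => by rw [key, one_mul]⟩,
    ⟨1, zero_le_one, fun a => by rw [key, one_mul]⟩⟩

theorem equivalent_squareFamily {q : M → ℝ} {w : Fin 2 × T → M}
    (hw : IsUnconditionalFamily q w) {q' : N → ℝ} {e : T → N}
    (h : ∀ β, Equivalent q' e q (w ∘ Prod.mk β)) :
    Equivalent (squareNorm q') (squareFamily e) q w := by
  obtain ⟨κ, hκ, hqt⟩ := hw.quasi_triangle
  obtain ⟨K, hK, hle⟩ := hw.le_of_abs_le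
  choose A hA hup using fun β => (h β).1
  choose B hB hdown using fun β => (h β).2
  have hsq (a : Fin 2 × T →₀ ℝ) : squareNorm q' (linearCombination ℝ (squareFamily e) a) =
      max (q' (linearCombination ℝ e (a.curry 0))) (q' (linearCombination ℝ e (a.curry 1))) := by
    rw [linearCombination_squareFamily]; rfl
  have hcopy (a : Fin 2 × T →₀ ℝ) (β : Fin 2) : linearCombination ℝ (w ∘ Prod.mk β) (a.curry β) =
      linearCombination ℝ w ((a.curry β).mapDomain (Prod.mk β)) :=
    (linearCombination_mapDomain ℝ _ _).symm
  have hM (a : Fin 2 × T →₀ ℝ) (β : Fin 2) : q' (linearCombination ℝ e (a.curry β)) ≤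
      max (q' (linearCombination ℝ e (a.curry 0))) (q' (linearCombination ℝ e (a.curry 1))) := by
    fin_cases β
    exacts [le_max_left _ _, le_max_right _ _]
  refine ⟨⟨κ * (A 0 + A 1), mul_nonneg hκ (add_nonneg (hA 0) (hA 1)), fun a => ?_⟩,
    ⟨max (B 0) (B 1) * K, mul_nonneg ((hB 0).trans (le_max_left _ _)) hK, fun a => ?_⟩⟩
  · rw [hsq]
    set m := max (q' (linearCombination ℝ e (a.curry 0))) (q' (linearCombination ℝ e (a.curry 1)))
    have hm (β : Fin 2) : q (linearCombination ℝ (w ∘ Prod.mk β) (a.curry β)) ≤ A β * m :=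
      (hup β _).trans (mul_le_mul_of_nonneg_left (hM a β) (hA β))
    calc q (linearCombination ℝ w a)
        = q (linearCombination ℝ w ((a.curry 0).mapDomain (Prod.mk 0) +
            (a.curry 1).mapDomain (Prod.mk 1))) := by
          rw [map_add, ← hcopy, ← hcopy, linearCombination_prod, Fin.sum_univ_two]
      _ ≤ κ * (A 0 * m + A 1 * m) := by
          refine (hqt _ _).trans (mul_le_mul_of_nonneg_left ?_ hκ)
          rw [← hcopy, ← hcopy]
          exact add_le_add (hm 0) (hm 1)
      _ = κ * (A 0 + A 1) * m := by ring
  · have hm (β : Fin 2) : q' (linearCombination ℝ e (a.curry β)) ≤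
        max (B 0) (B 1) * K * q (linearCombination ℝ w a) := by
      calc q' (linearCombination ℝ e (a.curry β))
          ≤ B β * q (linearCombination ℝ (w ∘ Prod.mk β) (a.curry β)) := hdown β _
        _ ≤ max (B 0) (B 1) * (K * q (linearCombination ℝ w a)) := by
          rw [hcopy]
          refine mul_le_mul ?_ (hle _ _ (abs_mapDomain_curry_le a β)) (hw.nonneg _)
            ((hB 0).trans (le_max_left _ _))
          fin_cases β
          exacts [le_max_left _ _, le_max_right _ _]
        _ = max (B 0) (B 1) * K * q (linearCombination ℝ w a) := by ring
    rw [hsq]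
    exact max_le (hm 0) (hm 1)

end Square

section SequenceSpace

variable {memL : (ℕ → ℝ) → Prop} {qL : (ℕ → ℝ) → ℝ}

theorem IsSequenceSpace.q_zero (hL : IsSequenceSpace memL qL) : qL 0 = 0 := by
  simpa using hL.q_smul 0 0

theorem IsSequenceSpace.mem_of_finite_support (hL : IsSequenceSpace memL qL) {f : ℕ → ℝ}
    (hf : (support f).Finite) : memL f := by
  classical
  have hsum : f = ∑ n ∈ hf.toFinset, f n • Pi.single n 1 := by
    ext m
    by_cases hm : f m = 0 <;> simp [Finset.sum_apply, Pi.single_apply, hm]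
  rw [hsum]
  exact Finset.sum_induction _ memL (fun _ _ hf hg => hL.add_mem hf hg) hL.zero_mem
    fun n _ => hL.smul_mem _ (hL.unit_mem n)

theorem IsSequenceSpace.mem_of_le_mul (hL : IsSequenceSpace memL qL) {f g : ℕ → ℝ} {A : ℝ}
    (hg : memL g) (hf : ∀ n, 0 ≤ f n) (hfg : ∀ n, f n ≤ A * g n) : memL f :=
  hL.solid (hL.smul_mem A hg) fun n => by
    rw [abs_of_nonneg (hf n)]
    exact (hfg n).trans (le_abs_self _)

theorem IsSequenceSpace.q_le_of_le_mul (hL : IsSequenceSpace memL qL) {f g : ℕ → ℝ} {A : ℝ}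
    (hg : memL g) (hA : 0 ≤ A) (hf : ∀ n, 0 ≤ f n) (hfg : ∀ n, f n ≤ A * g n) :
    qL f ≤ A * qL g := by
  calc qL f ≤ qL (A • g) := hL.q_mono (hL.mem_of_le_mul hg hf hfg) (hL.smul_mem A hg) fun n => by
        rw [abs_of_nonneg (hf n)]
        exact (hfg n).trans (le_abs_self _)
    _ = A * qL g := by rw [hL.q_smul, abs_of_nonneg hA]

/-- The shift `S_τ = extend τ · 0` is an isomorphic embedding of `L` into itself. -/
def IsShiftEmbedding (memL : (ℕ → ℝ) → Prop) (qL : (ℕ → ℝ) → ℝ) (τ : ℕ → ℕ) : Prop :=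
  ∃ c C : ℝ, 0 < c ∧ 0 ≤ C ∧ ∀ u, memL u → memL (extend τ u 0) ∧
    c * qL u ≤ qL (extend τ u 0) ∧ qL (extend τ u 0) ≤ C * qL u

theorem IsShiftEmbedding.exists_q_le (hL : IsSequenceSpace memL qL) {τ : ℕ → ℕ}
    (hτ : Injective τ) (hs : IsShiftEmbedding memL qL τ) {C : ℝ} (hC : 0 ≤ C) :
    ∃ A B : ℝ, 0 ≤ A ∧ 0 ≤ B ∧ ∀ u v : ℕ → ℝ, memL u → (∀ j, 0 ≤ u j) → (∀ m, 0 ≤ v m) →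
      (∀ m ∉ Set.range τ, v m = 0) → (∀ j, v (τ j) ≤ C * u j) → (∀ j, u j ≤ C * v (τ j)) →
      qL v ≤ A * qL u ∧ qL u ≤ B * qL v := by
  obtain ⟨c, CS, hc, hCS, hs⟩ := hs
  refine ⟨C * CS, c⁻¹ * C, by positivity, by positivity,
    fun u v hu hu0 hv0 hvτ hvu huv => ?_⟩
  obtain ⟨hw, hcw, hwC⟩ := hs u hu
  have hw0 (m : ℕ) : 0 ≤ extend τ u 0 m := by
    by_cases hm : m ∈ Set.range τ
    · obtain ⟨j, rfl⟩ := hm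
      simpa [hτ.extend_apply] using hu0 j
    · simp [extend_apply' _ _ _ hm]
  have hvw (m : ℕ) : v m ≤ C * extend τ u 0 m := by
    by_cases hm : m ∈ Set.range τ
    · obtain ⟨j, rfl⟩ := hm
      simpa [hτ.extend_apply] using hvu j
    · simp [extend_apply' _ _ _ hm, hvτ m hm]
  have hwv (m : ℕ) : extend τ u 0 m ≤ C * v m := by
    by_cases hm : m ∈ Set.range τ
    · obtain ⟨j, rfl⟩ := hm
      simpa [hτ.extend_apply] using huv j
    · simpa [extend_apply' _ _ _ hm] using mul_nonneg hC (hv0 m)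
  constructor
  · calc qL v ≤ C * qL (extend τ u 0) := hL.q_le_of_le_mul hw hC hv0 hvw
      _ ≤ C * (CS * qL u) := by gcongr
      _ = C * CS * qL u := by ring
  · rw [mul_assoc, le_inv_mul_iff₀ hc]
    exact hcw.trans (hL.q_le_of_le_mul (hL.mem_of_le_mul hw hv0 hvw) hC hw0 hwv)

theorem extend_eq_interleave {ρ : Bool × ℕ → ℕ} (hρ : Injective ρ) (b : Bool) (u : ℕ → ℝ) :
    extend (fun j => ρ (b, j)) u 0 =
      interleave ρ (bif b then u else 0) (bif b then 0 else u) := by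
  have hρb : Injective fun j => ρ (b, j) := hρ.comp (Prod.mk_right_injective b)
  funext m
  by_cases hm : ∃ p, ρ p = m
  · obtain ⟨⟨b', n⟩, rfl⟩ := hm
    rw [interleave, hρ.extend_apply]
    by_cases hb : b' = b
    · subst hb
      rw [hρb.extend_apply]
      cases b' <;> rfl
    · rw [extend_apply' _ _ _ fun ⟨k, hk⟩ => hb (congrArg Prod.fst (hρ hk)).symm]
      cases b <;> cases b' <;> simp_all
  · rw [extend_apply' _ _ _ fun ⟨k, hk⟩ => hm ⟨_, hk⟩, interleave, extend_apply' _ _ _ hm]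

theorem SquareStable.exists_shiftEmbeddings (hL : IsSequenceSpace memL qL)
    (h : SquareStable memL qL) :
    ∃ τ : Fin 2 → ℕ → ℕ, Injective (fun p : Fin 2 × ℕ => τ p.1 p.2) ∧
      (∀ β j, j ≤ τ β j) ∧ ∀ β, IsShiftEmbedding memL qL (τ β) := by
  obtain ⟨ρ, hρ, hmono₀, hmono₁, c, C, hc, hC, hbd⟩ := h
  have hshift (b : Bool) : IsShiftEmbedding memL qL fun j => ρ (b, j) := by
    refine ⟨c, C, hc, hC.le, fun u hu => ?_⟩
    rw [extend_eq_interleave hρ]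
    cases b
    · simpa [hL.q_zero, hL.q_nonneg u] using hbd 0 u hL.zero_mem hu
    · simpa [hL.q_zero, hL.q_nonneg u] using hbd u 0 hu hL.zero_mem
  refine ⟨fun β j => ρ (finTwoEquiv β, j), hρ.comp (finTwoEquiv.injective.prodMap injective_id),
    fun β j => ?_, fun β => hshift _⟩
  show j ≤ ρ (finTwoEquiv β, j)
  generalize finTwoEquiv β = b
  cases b
  exacts [hmono₀.le_apply, hmono₁.le_apply]

end SequenceSpace

section DirectSum

variable {J : Type*} {ι : J → Type*}

theorem injective_prod_sigmaMap {B : Type*} {τ : B → J → J}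
    (hτ : Injective fun p : B × J => τ p.1 p.2) {em : ∀ β j, ι j → ι (τ β j)}
    (hem : ∀ β j, Injective (em β j)) :
    Injective fun p : B × (Σ j, ι j) => Sigma.map (τ p.1) (em p.1) p.2 := by
  rintro ⟨β, j, i⟩ ⟨β', j', i'⟩ h
  simp only [Sigma.map, Sigma.mk.inj_iff] at h
  obtain ⟨h₁, h₂⟩ := h
  have h := hτ (a₁ := (β, j)) (a₂ := (β', j')) h₁
  simp only [Prod.mk.injEq] at h
  obtain ⟨rfl, rfl⟩ := h
  rw [hem β j (eq_of_heq h₂)]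

variable [DecidableEq J] {𝕏 : J → Type*} [∀ j, AddCommGroup (𝕏 j)] [∀ j, Module ℝ (𝕏 j)]

def dirSumBasis (x : ∀ j, ι j → 𝕏 j) : (Σ j, ι j) → ∀ j, 𝕏 j :=
  fun s => Pi.single s.1 (x s.1 s.2)

theorem linearCombination_dirSumBasis_comp_sigmaMap_apply {τ : J → J} (hτ : Injective τ)
    (x : ∀ j, ι j → 𝕏 j) (em : ∀ j, ι j → ι (τ j)) (a : (Σ j, ι j) →₀ ℝ) (j : J) :
    linearCombination ℝ (dirSumBasis x ∘ Sigma.map τ em) a (τ j) =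
      linearCombination ℝ (x (τ j) ∘ em j) (a.split j) := by
  rw [linearCombination_apply, sigma_sum, Finset.sum_apply, Finset.sum_eq_single j]
  · simp [linearCombination_apply, Finsupp.sum, Finset.sum_apply, dirSumBasis, Sigma.map]
  · intro k _ hk
    simp [Finsupp.sum, Finset.sum_apply, dirSumBasis, Sigma.map, Pi.single_eq_of_ne (hτ.ne hk).symm]
  · intro hj
    rw [mem_splitSupport_iff_nonzero, not_not] at hj
    simp [hj]

theorem linearCombination_dirSumBasis_comp_sigmaMap_apply_of_notMem {τ : J → J}
    (x : ∀ j, ι j → 𝕏 j) (em : ∀ j, ι j → ι (τ j)) (a : (Σ j, ι j) →₀ ℝ) {m : J}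
    (hm : m ∉ Set.range τ) : linearCombination ℝ (dirSumBasis x ∘ Sigma.map τ em) a m = 0 := by
  rw [linearCombination_apply, Finsupp.sum, Finset.sum_apply]
  refine Finset.sum_eq_zero fun s _ => ?_
  have : m ≠ τ s.1 := fun h => hm ⟨s.1, h.symm⟩
  simp [dirSumBasis, Sigma.map, Pi.single_eq_of_ne this]

theorem linearCombination_dirSumBasis_apply (x : ∀ j, ι j → 𝕏 j) (a : (Σ j, ι j) →₀ ℝ) (j : J) :
    linearCombination ℝ (dirSumBasis x) a j = linearCombination ℝ (x j) (a.split j) :=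
  linearCombination_dirSumBasis_comp_sigmaMap_apply injective_id x (fun _ => id) a j

end DirectSum

theorem IsQuasiNormWith.q_zero {M : Type*} [AddCommGroup M] [Module ℝ M] {q : M → ℝ} {C₀ : ℝ}
    (h : IsQuasiNormWith q C₀) : q 0 = 0 := by
  simpa using h.q_smul 0 0

section LatticeSum

variable {memL : (ℕ → ℝ) → Prop} {qL : (ℕ → ℝ) → ℝ} {ι : ℕ → Type*} {𝕏 : ℕ → Type*}
  [∀ j, AddCommGroup (𝕏 j)] [∀ j, Module ℝ (𝕏 j)] {qX : ∀ j, 𝕏 j → ℝ} {C₀ : ℝ}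

def latticeSumNorm (qL : (ℕ → ℝ) → ℝ) (qX : ∀ j, 𝕏 j → ℝ) (f : ∀ j, 𝕏 j) : ℝ :=
  qL fun j => qX j (f j)

theorem latticeSumNorm_zero (hL : IsSequenceSpace memL qL)
    (hqX : ∀ j, IsQuasiNormWith (qX j) C₀) : latticeSumNorm qL qX 0 = 0 := by
  simp only [latticeSumNorm, Pi.zero_apply, (hqX _).q_zero]
  exact hL.q_zero

theorem mem_blockNorms_linearCombination_dirSumBasis (hL : IsSequenceSpace memL qL)
    (hqX : ∀ j, IsQuasiNormWith (qX j) C₀) (x : ∀ j, ι j → 𝕏 j) (a : (Σ j, ι j) →₀ ℝ) :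
    memL fun j => qX j (linearCombination ℝ (dirSumBasis x) a j) := by
  refine hL.mem_of_finite_support (a.splitSupport.finite_toSet.subset fun j hj => ?_)
  rw [Finset.mem_coe, mem_splitSupport_iff_nonzero]
  intro h0
  apply hj
  show qX j _ = 0
  rw [linearCombination_dirSumBasis_apply, h0, map_zero, (hqX j).q_zero]

theorem isUnconditionalFamily_dirSumBasis (hL : IsSequenceSpace memL qL) (hC₀ : 0 ≤ C₀)
    (hqX : ∀ j, IsQuasiNormWith (qX j) C₀) {x : ∀ j, ι j → 𝕏 j} {K : ℝ}
    (hx : ∀ j, IsKUncondBasis (qX j) (x j) K) :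
    IsUnconditionalFamily (latticeSumNorm qL qX) (dirSumBasis x) := by
  obtain ⟨CL, hCL₁, hCL⟩ := hL.quasi_triangle
  have hmem := mem_blockNorms_linearCombination_dirSumBasis hL hqX x
  refine ⟨fun a => hL.q_nonneg _, ⟨C₀ * CL, mul_nonneg hC₀ (zero_le_one.trans hCL₁), fun a b => ?_⟩,
    ⟨|K|, abs_nonneg K, fun a b hab => ?_⟩⟩
  · calc latticeSumNorm qL qX (linearCombination ℝ (dirSumBasis x) (a + b))
        ≤ C₀ * qL ((fun j => qX j (linearCombination ℝ (dirSumBasis x) a j)) +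
            fun j => qX j (linearCombination ℝ (dirSumBasis x) b j)) := by
          refine hL.q_le_of_le_mul (hL.add_mem (hmem a) (hmem b)) hC₀
            (fun j => (hqX j).q_nonneg _) fun j => ?_
          simpa only [map_add, Pi.add_apply] using (hqX j).quasi_triangle _ _
      _ ≤ C₀ * (CL * (latticeSumNorm qL qX (linearCombination ℝ (dirSumBasis x) a) +
            latticeSumNorm qL qX (linearCombination ℝ (dirSumBasis x) b))) := by
          gcongr
          exact hCL (hmem a) (hmem b)
      _ = _ := by ring
  · refine hL.q_le_of_le_mul (hmem a) (abs_nonneg K) (fun j => (hqX j).q_nonneg _) fun j => ?_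
    show qX j _ ≤ |K| * qX j _
    rw [linearCombination_dirSumBasis_apply, linearCombination_dirSumBasis_apply]
    refine ((hx j).2 _ _ fun i => ?_).trans
      (mul_le_mul_of_nonneg_right (le_abs_self K) ((hqX j).q_nonneg _))
    simpa only [split_apply] using hab ⟨j, i⟩

theorem equivalent_dirSumBasis_comp_sigmaMap (hL : IsSequenceSpace memL qL)
    (hqX : ∀ j, IsQuasiNormWith (qX j) C₀) {τ : ℕ → ℕ} (hτ : Injective τ)
    (hs : IsShiftEmbedding memL qL τ) {x : ∀ j, ι j → 𝕏 j} {em : ∀ j, ι j → ι (τ j)} {C : ℝ}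
    (hC : 0 < C) (hem : ∀ j, EquivalentFamilies (qX j) (qX (τ j)) (x j) (x (τ j) ∘ em j) C) :
    Equivalent (latticeSumNorm qL qX) (dirSumBasis x)
      (latticeSumNorm qL qX) (dirSumBasis x ∘ Sigma.map τ em) := by
  obtain ⟨A, B, hA, hB, hAB⟩ := hs.exists_q_le hL hτ hC.le
  have key (a : (Σ j, ι j) →₀ ℝ) :=
    hAB (fun j => qX j (linearCombination ℝ (dirSumBasis x) a j))
      (fun m => qX m (linearCombination ℝ (dirSumBasis x ∘ Sigma.map τ em) a m))
      (mem_blockNorms_linearCombination_dirSumBasis hL hqX x a)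
      (fun j => (hqX j).q_nonneg _) (fun m => (hqX m).q_nonneg _)
      (fun m hm => by
        rw [linearCombination_dirSumBasis_comp_sigmaMap_apply_of_notMem x em a hm,
          (hqX m).q_zero])
      (fun j => by
        rw [linearCombination_dirSumBasis_comp_sigmaMap_apply hτ,
          linearCombination_dirSumBasis_apply]
        exact (hem j _).2)
      (fun j => by
        rw [linearCombination_dirSumBasis_comp_sigmaMap_apply hτ,
          linearCombination_dirSumBasis_apply, ← inv_mul_le_iff₀ hC]
        exact (hem j _).1)
  exact ⟨⟨A, hA, fun a => (key a).1⟩, ⟨B, hB, fun a => (key a).2⟩⟩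

end LatticeSum

theorem directSum_permutatively_equivalent_to_square_general
    (memL : (ℕ → ℝ) → Prop) (qL : (ℕ → ℝ) → ℝ)
    (hL : IsSequenceSpace memL qL) (hsq : SquareStable memL qL)
    (𝕏 : ℕ → Type*) [∀ j, AddCommGroup (𝕏 j)] [∀ j, Module ℝ (𝕏 j)]
    (qX : ∀ j, 𝕏 j → ℝ)
    (C₀ : ℝ) (hC₀ : 1 ≤ C₀) (hqX : ∀ j, IsQuasiNormWith (qX j) C₀)
    (ι : ℕ → Type)
    (x : ∀ j, ι j → 𝕏 j) (K : ℝ) (hbasis : ∀ j, IsKUncondBasis (qX j) (x j) K)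
    (C : ℝ) (hC : 0 < C)
    (hnested : ∀ j k : ℕ, j ≤ k → ∃ π : ι j → ι k, Function.Injective π ∧
      EquivalentFamilies (qX j) (qX k) (x j) (fun n => x k (π n)) C) :
    -- the direct sum basis `⊕_j X_j` of `(⊕_j 𝕏_j)_L` is permutatively equivalent
    -- to its square
    ∃ (π : (Σ j, ι j) ≃ (Fin 2 × Σ j, ι j)) (C' : ℝ), 0 < C' ∧
      EquivalentFamilies
        (fun f : ∀ j, 𝕏 j => qL (fun j => qX j (f j)))
        (fun F : Fin 2 → ∀ j, 𝕏 j => max (qL (fun j => qX j (F 0 j))) (qL (fun j => qX j (F 1 j))))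
        (fun s : Σ j, ι j => Pi.single s.1 (x s.1 s.2))
        (fun s => Pi.single (π s).1 (Pi.single (π s).2.1 (x (π s).2.1 (π s).2.2)))
        C' := by
  set e := dirSumBasis x
  have he : IsUnconditionalFamily (latticeSumNorm qL qX) e :=
    isUnconditionalFamily_dirSumBasis hL (zero_le_one.trans hC₀) hqX hbasis
  obtain ⟨τ, hτ, hτ_le, hshift⟩ := hsq.exists_shiftEmbeddings hL
  choose em hem_inj hem using fun β j => hnested j (τ β j) (hτ_le β j)
  set σ : Fin 2 × (Σ j, ι j) → Σ j, ι j := fun p => Sigma.map (τ p.1) (em p.1) p.2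
  have hσ : Function.Injective σ := injective_prod_sigmaMap hτ hem_inj
  have hcopy (β : Fin 2) : Equivalent (latticeSumNorm qL qX) e (latticeSumNorm qL qX)
      (e ∘ Sigma.map (τ β) (em β)) := by
    have hτβ : Function.Injective (τ β) := hτ.comp (Prod.mk_right_injective β)
    exact equivalent_dirSumBasis_comp_sigmaMap hL hqX hτβ (hshift β) hC (hem β)
  have hsquare : Equivalent (squareNorm (latticeSumNorm qL qX)) (squareFamily e)
      (latticeSumNorm qL qX) (e ∘ σ) :=
    equivalent_squareFamily (w := e ∘ σ) (he.comp hσ) hcopy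
  have hsquare_nonneg (F : Fin 2 → ∀ j, 𝕏 j) : 0 ≤ squareNorm (latticeSumNorm qL qX) F :=
    (hL.q_nonneg _).trans (le_max_left _ _)
  have hsquare_uncond := (he.comp hσ).of_equivalent hsquare.symm fun _ => hsquare_nonneg _
  obtain ⟨π, hπ⟩ := he.exists_equiv_equivalent hsquare_uncond (Prod.mk_right_injective 0) hσ
    (equivalent_squareFamily_comp_mk_zero (latticeSumNorm_zero hL hqX) he.nonneg) hsquare
  obtain ⟨C', hC', hequiv⟩ := hπ.exists_equivalentFamilies he.nonneg fun _ => hsquare_nonneg _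
  exact ⟨π, C', hC', hequiv⟩

theorem directSum_permutatively_equivalent_to_square
    (memL : (ℕ → ℝ) → Prop) (qL : (ℕ → ℝ) → ℝ)
    (hL : IsSequenceSpace memL qL) (hsq : SquareStable memL qL)
    (𝕏 : ℕ → Type*) [∀ j, AddCommGroup (𝕏 j)] [∀ j, Module ℝ (𝕏 j)]
    (qX : ∀ j, 𝕏 j → ℝ)
    (C₀ : ℝ) (hC₀ : 1 ≤ C₀) (hqX : ∀ j, IsQuasiNormWith (qX j) C₀)
    (ι : ℕ → Type) [∀ j, Countable (ι j)]
    (x : ∀ j, ι j → 𝕏 j) (K : ℝ) (hbasis : ∀ j, IsKUncondBasis (qX j) (x j) K)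
    (C : ℝ) (hC : 0 < C)
    (hnested : ∀ j k : ℕ, j ≤ k → ∃ π : ι j → ι k, Function.Injective π ∧
      EquivalentFamilies (qX j) (qX k) (x j) (fun n => x k (π n)) C) :
    -- the direct sum basis `⊕_j X_j` of `(⊕_j 𝕏_j)_L` is permutatively equivalent
    -- to its square
    ∃ (π : (Σ j, ι j) ≃ (Fin 2 × Σ j, ι j)) (C' : ℝ), 0 < C' ∧
      EquivalentFamilies
        (fun f : ∀ j, 𝕏 j => qL (fun j => qX j (f j)))
        (fun F : Fin 2 → ∀ j, 𝕏 j => max (qL (fun j => qX j (F 0 j))) (qL (fun j => qX j (F 1 j))))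
        (fun s : Σ j, ι j => Pi.single s.1 (x s.1 s.2))
        (fun s => Pi.single (π s).1 (Pi.single (π s).2.1 (x (π s).2.1 (π s).2.2)))
        C' :=
  directSum_permutatively_equivalent_to_square_general memL qL hL hsq 𝕏 qX C₀ hC₀ hqX ι x K hbasis C
    hC hnested
end
end
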